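/- Let A ∈ ℝ with cos(Aπ) ≠ 0, let k > 0 with sin(kπ) ≠ 0, and let (a_j)_{j∈ℤ} be complex numbers. Define ψ, φ : ℝ → ℂ by setting, for x ∈ [jπ, (j+1)π): ψ(x) = e^{−iA(x−jπ)}·[ a_j·cos(k(x−jπ)) + (a_{j+1}e^{iAπ} − a_j·cos(kπ))·sin(k(x−jπ))/sin(kπ) ] and φ(x) = e^{iA(x−jπ)}·[ a_j·cos(k(x−jπ)) + (a_{j+1}e^{−iAπ} − a_j·cos(kπ))·sin(k(x−jπ))/sin(kπ) ]. Then: (i) Σ_{j∈ℤ} |a_j|² < ∞ if and only if ∫_ℝ (|ψ(x)|² + |φ(x)|²) dx < ∞; and (ii) the sequence (a_j) is bounded if and only if the functions ψ and φ are bounded on ℝ. -/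

import Mathlib

open scoped Real
open MeasureTheory Set Function

/-!
On the cell `[jπ, (j+1)π)`, with `u = x - jπ`, both components are, up to a unimodular phase,
`a_j cos (k u) + β_j sin (k u)` with `|β_j| ≤ (|a_j| + |a_{j+1}|) / |sin (k π)|`,
and `ψ (jπ) = a_j`.
This gives the `ℓ^∞` correspondence and the upper bound `∫_cell ≲ |a_j|² + |a_{j+1}|²`.
The cell integral is the quadratic form of the Gram matrix of `cos (k u)`, `sin (k u)` on `[0, π]`,
whose determinant `(k²π² - sin² (kπ)) / (4k²)` is positive, so it also dominates `c |a_j|²`;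
summing over the cells gives the `ℓ²–L²` correspondence.
-/

/-- The upper-halfcircle component reconstructed on `[jπ, (j+1)π)` from vertex values. -/
noncomputable def psiRec (A k : ℝ) (a : ℤ → ℂ) (j : ℤ) (x : ℝ) : ℂ :=
  Complex.exp (-(Complex.I) * ((A * (x - (j : ℝ) * π) : ℝ) : ℂ)) *
    (a j * ((Real.cos (k * (x - (j : ℝ) * π)) : ℝ) : ℂ) +
      (a (j + 1) * Complex.exp (Complex.I * ((A * π : ℝ) : ℂ))
          - a j * ((Real.cos (k * π) : ℝ) : ℂ)) *
        ((Real.sin (k * (x - (j : ℝ) * π)) / Real.sin (k * π) : ℝ) : ℂ))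

/-- The lower-halfcircle component reconstructed on `[jπ, (j+1)π)` from vertex values. -/
noncomputable def phiRec (A k : ℝ) (a : ℤ → ℂ) (j : ℤ) (x : ℝ) : ℂ :=
  Complex.exp (Complex.I * ((A * (x - (j : ℝ) * π) : ℝ) : ℂ)) *
    (a j * ((Real.cos (k * (x - (j : ℝ) * π)) : ℝ) : ℂ) +
      (a (j + 1) * Complex.exp (-(Complex.I) * ((A * π : ℝ) : ℂ))
          - a j * ((Real.cos (k * π) : ℝ) : ℂ)) *
        ((Real.sin (k * (x - (j : ℝ) * π)) / Real.sin (k * π) : ℝ) : ℂ))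

lemma iUnion_Ico_intCast_mul {p : ℝ} (hp : 0 < p) :
    ⋃ j : ℤ, Ico ((j : ℝ) * p) (((j : ℝ) + 1) * p) = univ := by
  simpa [zsmul_eq_mul] using iUnion_Ico_zsmul hp

lemma pairwise_disjoint_Ico_intCast_mul (p : ℝ) :
    Pairwise (Disjoint on fun j : ℤ => Ico ((j : ℝ) * p) (((j : ℝ) + 1) * p)) := by
  simpa [zsmul_eq_mul] using pairwise_disjoint_Ico_zsmul p

lemma integrable_iff_summable_setIntegral_of_nonneg {X ι : Type*} [MeasurableSpace X]
    [Countable ι] {μ : Measure X} {s : ι → Set X} (hs : ∀ i, MeasurableSet (s i))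
    (hd : Pairwise (Disjoint on s)) (hU : ⋃ i, s i = univ) {f : X → ℝ} (hf : ∀ x, 0 ≤ f x)
    (hfi : ∀ i, IntegrableOn f (s i) μ) :
    Integrable f μ ↔ Summable fun i => ∫ x in s i, f x ∂μ := by
  rw [← integrableOn_univ, ← hU]
  refine ⟨fun h => (hasSum_integral_iUnion hs hd h).summable, fun h => ?_⟩
  refine integrableOn_iUnion_of_summable_integral_norm hfi ?_
  simpa only [Real.norm_of_nonneg (hf _)] using h

lemma summable_iff_of_le_of_le_add_shift {u g : ℤ → ℝ} {c M : ℝ} (hc : 0 < c) (hu : 0 ≤ u)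
    (hlow : ∀ j, c * u j ≤ g j) (hup : ∀ j, g j ≤ M * (u j + u (j + 1))) :
    Summable u ↔ Summable g := by
  constructor
  · intro h
    have hshift : Summable fun j => u (j + 1) := (Equiv.addRight (1 : ℤ)).summable_iff.mpr h
    exact .of_nonneg_of_le (fun j => (mul_nonneg hc.le (hu j)).trans (hlow j)) hup
      ((h.add hshift).mul_left M)
  · intro h
    refine .of_nonneg_of_le hu (fun j => ?_) (h.mul_left c⁻¹)
    rw [le_inv_mul_iff₀ hc]
    exact hlow j

section Harmonic

lemma norm_cos_smul_add_sin_smul_le {E : Type*} [SeminormedAddCommGroup E] [NormedSpace ℝ E]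
    (θ : ℝ) (α β : E) : ‖Real.cos θ • α + Real.sin θ • β‖ ≤ ‖α‖ + ‖β‖ := by
  refine (norm_add_le _ _).trans (add_le_add ?_ ?_) <;> rw [norm_smul, Real.norm_eq_abs]
  · exact mul_le_of_le_one_left (norm_nonneg _) (Real.abs_cos_le_one θ)
  · exact mul_le_of_le_one_left (norm_nonneg _) (Real.abs_sin_le_one θ)

variable {E : Type*} [NormedAddCommGroup E] [InnerProductSpace ℝ E]

lemma integral_norm_sq_cos_smul_add_sin_smul (k a b : ℝ) (α β : E) :
    ∫ u in a..b, ‖Real.cos (k * u) • α + Real.sin (k * u) • β‖ ^ 2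
      = (∫ u in a..b, Real.cos (k * u) ^ 2) * ‖α‖ ^ 2
        + (∫ u in a..b, Real.sin (k * u) ^ 2) * ‖β‖ ^ 2
        + 2 * (∫ u in a..b, Real.sin (k * u) * Real.cos (k * u)) * inner ℝ α β := by
  have hexp : ∀ u, ‖Real.cos (k * u) • α + Real.sin (k * u) • β‖ ^ 2
      = ‖α‖ ^ 2 * Real.cos (k * u) ^ 2 + ‖β‖ ^ 2 * Real.sin (k * u) ^ 2
        + 2 * inner ℝ α β * (Real.sin (k * u) * Real.cos (k * u)) := by
    intro u
    rw [norm_add_sq_real, norm_smul, norm_smul, real_inner_smul_left, real_inner_smul_right,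
      Real.norm_eq_abs, Real.norm_eq_abs, mul_pow, mul_pow, sq_abs, sq_abs]
    ring
  simp_rw [hexp]
  rw [intervalIntegral.integral_add, intervalIntegral.integral_add,
    intervalIntegral.integral_const_mul, intervalIntegral.integral_const_mul,
    intervalIntegral.integral_const_mul]
  · ring
  all_goals
    apply Continuous.intervalIntegrable
    fun_prop

lemma integral_cos_mul_sq_add_integral_sin_mul_sq (k a b : ℝ) :
    (∫ u in a..b, Real.cos (k * u) ^ 2) + (∫ u in a..b, Real.sin (k * u) ^ 2) = b - a := by
  rw [← intervalIntegral.integral_add (by apply Continuous.intervalIntegrable; fun_prop)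
    (by apply Continuous.intervalIntegrable; fun_prop)]
  simp [Real.cos_sq_add_sin_sq]

lemma sq_integral_sin_mul_cos_lt {k : ℝ} (hk : k ≠ 0) :
    (∫ u in (0 : ℝ)..π, Real.sin (k * u) * Real.cos (k * u)) ^ 2 <
      (∫ u in (0 : ℝ)..π, Real.cos (k * u) ^ 2) * (∫ u in (0 : ℝ)..π, Real.sin (k * u) ^ 2) := by
  simp only [intervalIntegral.integral_comp_mul_left (fun x => Real.cos x ^ 2) hk,
    intervalIntegral.integral_comp_mul_left (fun x => Real.sin x ^ 2) hk,
    intervalIntegral.integral_comp_mul_left (fun x => Real.sin x * Real.cos x) hk,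
    integral_cos_sq, integral_sin_sq, integral_sin_mul_cos₁, mul_zero, Real.sin_zero,
    Real.cos_zero, smul_eq_mul]
  field_simp
  rw [div_lt_div_iff_of_pos_right (by positivity)]
  linear_combination Real.sin_sq_lt_sq (mul_ne_zero hk Real.pi_ne_zero)
    + Real.sin (k * π) ^ 2 * Real.sin_sq_add_cos_sq (k * π)

lemma exists_pos_mul_sq_le_integral_norm_sq_cos_smul_add_sin_smul {k : ℝ} (hk : k ≠ 0) :
    ∃ c > 0, ∀ α β : E,
      c * ‖α‖ ^ 2 ≤ ∫ u in (0 : ℝ)..π, ‖Real.cos (k * u) • α + Real.sin (k * u) • β‖ ^ 2 := by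
  simp only [integral_norm_sq_cos_smul_add_sin_smul]
  have hsum := integral_cos_mul_sq_add_integral_sin_mul_sq k 0 π
  have hdet := sq_integral_sin_mul_cos_lt hk
  set C := ∫ u in (0 : ℝ)..π, Real.cos (k * u) ^ 2
  set S := ∫ u in (0 : ℝ)..π, Real.sin (k * u) ^ 2
  set X := ∫ u in (0 : ℝ)..π, Real.sin (k * u) * Real.cos (k * u)
  have hS : 0 < S := by nlinarith [sq_nonneg X, Real.pi_pos]
  refine ⟨(C * S - X ^ 2) / S, div_pos (by linarith) hS, fun α β => ?_⟩
  rw [div_mul_eq_mul_div, div_le_iff₀ hS]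
  -- `S · (C ‖α‖² + S ‖β‖² + 2 X ⟪α, β⟫) - (C S - X²) ‖α‖² ≥ (S ‖β‖ - |X| ‖α‖)²` by Cauchy–Schwarz
  have hX : |X * inner ℝ α β| ≤ |X| * (‖α‖ * ‖β‖) := by
    rw [abs_mul]
    exact mul_le_mul_of_nonneg_left (abs_real_inner_le_norm α β) (abs_nonneg X)
  nlinarith [neg_abs_le (X * inner ℝ α β), sq_nonneg (S * ‖β‖ - |X| * ‖α‖), sq_abs X]

end Harmonic

lemma Continuous.integrableOn_Ico_of_eqOn {E : Type*} [NormedAddCommGroup E] {f g : ℝ → E}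
    {a b : ℝ} (hg : Continuous g) (h : EqOn f g (Ico a b)) : IntegrableOn f (Ico a b) :=
  (hg.integrableOn_Icc.mono_set Ico_subset_Icc_self).congr_fun h.symm measurableSet_Ico

lemma setIntegral_Ico_le_mul_of_le {f : ℝ → ℝ} {s t C : ℝ} (hst : s ≤ t)
    (hf : IntegrableOn f (Ico s t)) (h : ∀ x ∈ Ico s t, f x ≤ C) :
    ∫ x in Ico s t, f x ≤ C * (t - s) := by
  refine (setIntegral_mono_on hf (integrableOn_const measure_Ico_lt_top.ne) measurableSet_Ico h
    ).trans_eq ?_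
  rw [setIntegral_const, Real.volume_real_Ico_of_le hst, smul_eq_mul, mul_comm]

lemma setIntegral_Ico_comp_sub {E : Type*} [NormedAddCommGroup E] [NormedSpace ℝ E]
    (f : ℝ → E) {t p : ℝ} (hp : 0 ≤ p) :
    ∫ x in Ico t (t + p), f (x - t) = ∫ u in (0 : ℝ)..p, f u := by
  rw [integral_Ico_eq_integral_Ioo, ← integral_Ioc_eq_integral_Ioo,
    ← intervalIntegral.integral_of_le (by linarith), intervalIntegral.integral_comp_sub_right]
  simp

noncomputable def sinCoeff (A k : ℝ) (a : ℤ → ℂ) (j : ℤ) : ℂ :=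
  (a (j + 1) * Complex.exp (Complex.I * ((A * π : ℝ) : ℂ)) - a j * ((Real.cos (k * π) : ℝ) : ℂ))
    / ((Real.sin (k * π) : ℝ) : ℂ)

lemma phiRec_eq_psiRec_neg (A k : ℝ) (a : ℤ → ℂ) (j : ℤ) (x : ℝ) :
    phiRec A k a j x = psiRec (-A) k a j x := by
  unfold phiRec psiRec
  push_cast
  ring_nf

lemma psiRec_intCast_mul_pi (A k : ℝ) (a : ℤ → ℂ) (j : ℤ) : psiRec A k a j (j * π) = a j := by
  simp [psiRec]

lemma norm_psiRec (A k : ℝ) (a : ℤ → ℂ) (j : ℤ) (x : ℝ) :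
    ‖psiRec A k a j x‖ = ‖Real.cos (k * (x - j * π)) • a j
      + Real.sin (k * (x - j * π)) • sinCoeff A k a j‖ := by
  have hpsi : psiRec A k a j x = Complex.exp (-(Complex.I) * ((A * (x - (j : ℝ) * π) : ℝ) : ℂ))
      * (Real.cos (k * (x - j * π)) • a j + Real.sin (k * (x - j * π)) • sinCoeff A k a j) := by
    simp only [psiRec, sinCoeff, Complex.real_smul, Complex.ofReal_div]
    ring
  rw [hpsi, norm_mul, Complex.norm_exp]
  simp

@[fun_prop]
lemma continuous_psiRec (A k : ℝ) (a : ℤ → ℂ) (j : ℤ) : Continuous (psiRec A k a j) := by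
  unfold psiRec
  fun_prop

lemma norm_sinCoeff_le (A k : ℝ) (a : ℤ → ℂ) (j : ℤ) :
    ‖sinCoeff A k a j‖ ≤ (‖a j‖ + ‖a (j + 1)‖) / |Real.sin (k * π)| := by
  rw [sinCoeff, norm_div, Complex.norm_real, Real.norm_eq_abs]
  gcongr
  calc _ ≤ ‖a (j + 1) * Complex.exp (Complex.I * ((A * π : ℝ) : ℂ))‖
        + ‖a j * ((Real.cos (k * π) : ℝ) : ℂ)‖ := norm_sub_le _ _
    _ ≤ ‖a (j + 1)‖ + ‖a j‖ := by
        rw [norm_mul, norm_mul, Complex.norm_exp_I_mul_ofReal, Complex.norm_real,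
          Real.norm_eq_abs, mul_one]
        gcongr
        exact mul_le_of_le_one_right (norm_nonneg _) (Real.abs_cos_le_one _)
    _ = _ := add_comm _ _

lemma norm_psiRec_le (A k : ℝ) (a : ℤ → ℂ) (j : ℤ) (x : ℝ) :
    ‖psiRec A k a j x‖ ≤ (1 + |Real.sin (k * π)|⁻¹) * (‖a j‖ + ‖a (j + 1)‖) := by
  rw [norm_psiRec]
  calc _ ≤ ‖a j‖ + ‖sinCoeff A k a j‖ := norm_cos_smul_add_sin_smul_le _ _ _
    _ ≤ ‖a j‖ + (‖a j‖ + ‖a (j + 1)‖) / |Real.sin (k * π)| := by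
        gcongr; exact norm_sinCoeff_le A k a j
    _ ≤ _ := by
        rw [div_eq_mul_inv]
        linarith [norm_nonneg (a (j + 1))]

lemma norm_psiRec_sq_le (A k : ℝ) (a : ℤ → ℂ) (j : ℤ) (x : ℝ) :
    ‖psiRec A k a j x‖ ^ 2 ≤
      2 * (1 + |Real.sin (k * π)|⁻¹) ^ 2 * (‖a j‖ ^ 2 + ‖a (j + 1)‖ ^ 2) := by
  nlinarith [pow_le_pow_left₀ (norm_nonneg _) (norm_psiRec_le A k a j x) 2,
    mul_nonneg (sq_nonneg (1 + |Real.sin (k * π)|⁻¹)) (sq_nonneg (‖a j‖ - ‖a (j + 1)‖))]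

lemma setIntegral_norm_sq_psiRec (A k : ℝ) (a : ℤ → ℂ) (j : ℤ) :
    ∫ x in Ico ((j : ℝ) * π) (((j : ℝ) + 1) * π), ‖psiRec A k a j x‖ ^ 2
      = ∫ u in (0 : ℝ)..π, ‖Real.cos (k * u) • a j + Real.sin (k * u) • sinCoeff A k a j‖ ^ 2 := by
  simp_rw [norm_psiRec, add_one_mul (j : ℝ)]
  exact setIntegral_Ico_comp_sub
    (fun u => ‖Real.cos (k * u) • a j + Real.sin (k * u) • sinCoeff A k a j‖ ^ 2) Real.pi_pos.le

lemma exists_pos_mul_sq_le_setIntegral_norm_sq_psiRec (A : ℝ) {k : ℝ} (hk : k ≠ 0) :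
    ∃ c > 0, ∀ (a : ℤ → ℂ) (j : ℤ),
      c * ‖a j‖ ^ 2 ≤ ∫ x in Ico ((j : ℝ) * π) (((j : ℝ) + 1) * π), ‖psiRec A k a j x‖ ^ 2 := by
  obtain ⟨c, hc, hle⟩ := exists_pos_mul_sq_le_integral_norm_sq_cos_smul_add_sin_smul (E := ℂ) hk
  exact ⟨c, hc, fun a j => (setIntegral_norm_sq_psiRec A k a j).symm ▸ hle _ _⟩

lemma integrableOn_norm_sq_of_eqOn_psiRec {A k : ℝ} {a : ℤ → ℂ} {j : ℤ} {ψ : ℝ → ℂ}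
    (hψ : ∀ x ∈ Ico ((j : ℝ) * π) (((j : ℝ) + 1) * π), ψ x = psiRec A k a j x) :
    IntegrableOn (fun x => ‖ψ x‖ ^ 2) (Ico ((j : ℝ) * π) (((j : ℝ) + 1) * π)) :=
  Continuous.integrableOn_Ico_of_eqOn (g := fun x => ‖psiRec A k a j x‖ ^ 2) (by fun_prop)
    fun x hx => by simp only [hψ x hx]

lemma summable_norm_sq_iff_integrable_of_eqOn_psiRec {A₁ A₂ k : ℝ} (hk : k ≠ 0) {a : ℤ → ℂ}
    {ψ φ : ℝ → ℂ}
    (hψ : ∀ j : ℤ, ∀ x ∈ Ico ((j : ℝ) * π) (((j : ℝ) + 1) * π), ψ x = psiRec A₁ k a j x)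
    (hφ : ∀ j : ℤ, ∀ x ∈ Ico ((j : ℝ) * π) (((j : ℝ) + 1) * π), φ x = psiRec A₂ k a j x) :
    Summable (fun j => ‖a j‖ ^ 2) ↔ Integrable (fun x => ‖ψ x‖ ^ 2 + ‖φ x‖ ^ 2) := by
  set I : ℤ → Set ℝ := fun j => Ico ((j : ℝ) * π) (((j : ℝ) + 1) * π)
  have hψI : ∀ j, IntegrableOn (fun x => ‖ψ x‖ ^ 2) (I j) := fun j =>
    integrableOn_norm_sq_of_eqOn_psiRec (hψ j)
  have hFI : ∀ j, IntegrableOn (fun x => ‖ψ x‖ ^ 2 + ‖φ x‖ ^ 2) (I j) := fun j =>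
    (hψI j).add (integrableOn_norm_sq_of_eqOn_psiRec (hφ j))
  rw [integrable_iff_summable_setIntegral_of_nonneg (fun _ => measurableSet_Ico)
    (pairwise_disjoint_Ico_intCast_mul π) (iUnion_Ico_intCast_mul Real.pi_pos)
    (fun x => by positivity) hFI]
  obtain ⟨c, hc, hlow⟩ := exists_pos_mul_sq_le_setIntegral_norm_sq_psiRec A₁ hk
  set B := 1 + |Real.sin (k * π)|⁻¹
  refine summable_iff_of_le_of_le_add_shift (M := 4 * B ^ 2 * π) hc
    (fun j => by positivity) (fun j => ?_) (fun j => ?_)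
  · calc c * ‖a j‖ ^ 2 ≤ ∫ x in I j, ‖psiRec A₁ k a j x‖ ^ 2 := hlow a j
      _ = ∫ x in I j, ‖ψ x‖ ^ 2 :=
        setIntegral_congr_fun measurableSet_Ico fun x hx => by simp only [hψ j x hx]
      _ ≤ ∫ x in I j, ‖ψ x‖ ^ 2 + ‖φ x‖ ^ 2 :=
        setIntegral_mono_on (hψI j) (hFI j) measurableSet_Ico
          fun x _ => le_add_of_nonneg_right (by positivity)
  · refine (setIntegral_Ico_le_mul_of_le (C := 4 * B ^ 2 * (‖a j‖ ^ 2 + ‖a (j + 1)‖ ^ 2))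
      (by linarith [Real.pi_pos]) (hFI j) fun x hx => ?_).trans_eq (by ring)
    rw [hψ j x hx, hφ j x hx]
    linarith [norm_psiRec_sq_le A₁ k a j x, norm_psiRec_sq_le A₂ k a j x]

lemma bounded_iff_of_eqOn_psiRec {A₁ A₂ k : ℝ} {a : ℤ → ℂ} {ψ φ : ℝ → ℂ}
    (hψ : ∀ j : ℤ, ∀ x ∈ Ico ((j : ℝ) * π) (((j : ℝ) + 1) * π), ψ x = psiRec A₁ k a j x)
    (hφ : ∀ j : ℤ, ∀ x ∈ Ico ((j : ℝ) * π) (((j : ℝ) + 1) * π), φ x = psiRec A₂ k a j x) :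
    (∃ C : ℝ, ∀ j : ℤ, ‖a j‖ ≤ C) ↔ ∃ C : ℝ, ∀ x : ℝ, ‖ψ x‖ ≤ C ∧ ‖φ x‖ ≤ C := by
  set B := 1 + |Real.sin (k * π)|⁻¹
  refine ⟨fun ⟨C, hC⟩ => ⟨B * (C + C), fun x => ?_⟩, fun ⟨C, hC⟩ => ⟨C, fun j => ?_⟩⟩
  · obtain ⟨j, hx⟩ := mem_iUnion.mp ((iUnion_Ico_intCast_mul Real.pi_pos).symm ▸ mem_univ x)
    have hB : B * (‖a j‖ + ‖a (j + 1)‖) ≤ B * (C + C) :=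
      mul_le_mul_of_nonneg_left (add_le_add (hC j) (hC (j + 1))) (by positivity)
    rw [hψ j x hx, hφ j x hx]
    exact ⟨(norm_psiRec_le A₁ k a j x).trans hB, (norm_psiRec_le A₂ k a j x).trans hB⟩
  · simpa only [hψ j _ ⟨le_rfl, by linarith [Real.pi_pos]⟩, psiRec_intCast_mul_pi] using
      (hC (j * π)).1

theorem duality_lp_correspondence_general (A : ℝ) (k : ℝ) (hk : 0 < k)
    (a : ℤ → ℂ) (ψ φ : ℝ → ℂ)
    (hψ : ∀ j : ℤ, ∀ x ∈ Set.Ico ((j : ℝ) * π) (((j : ℝ) + 1) * π), ψ x = psiRec A k a j x)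
    (hφ : ∀ j : ℤ, ∀ x ∈ Set.Ico ((j : ℝ) * π) (((j : ℝ) + 1) * π), φ x = phiRec A k a j x) :
    (Summable (fun j : ℤ => ‖a j‖ ^ 2) ↔
      MeasureTheory.Integrable (fun x : ℝ => ‖ψ x‖ ^ 2 + ‖φ x‖ ^ 2)) ∧
    ((∃ C : ℝ, ∀ j : ℤ, ‖a j‖ ≤ C) ↔
      (∃ C : ℝ, ∀ x : ℝ, ‖ψ x‖ ≤ C ∧ ‖φ x‖ ≤ C)) := by
  have hφ' : ∀ j : ℤ, ∀ x ∈ Ico ((j : ℝ) * π) (((j : ℝ) + 1) * π), φ x = psiRec (-A) k a j x :=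
    fun j x hx => (hφ j x hx).trans (phiRec_eq_psiRec_neg A k a j x)
  exact ⟨summable_norm_sq_iff_integrable_of_eqOn_psiRec hk.ne' hψ hφ',
    bounded_iff_of_eqOn_psiRec hψ hφ'⟩

/-- the `ℓ²–L²` and `ℓ^∞–L^∞` correspondence between the vertex values
`a_j` and the reconstructed wave-function components `ψ, φ`. -/
theorem duality_lp_correspondence (A : ℝ) (hA : Real.cos (A * π) ≠ 0) (k : ℝ) (hk : 0 < k)
    (hks : Real.sin (k * π) ≠ 0) (a : ℤ → ℂ) (ψ φ : ℝ → ℂ)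
    (hψ : ∀ j : ℤ, ∀ x ∈ Set.Ico ((j : ℝ) * π) (((j : ℝ) + 1) * π), ψ x = psiRec A k a j x)
    (hφ : ∀ j : ℤ, ∀ x ∈ Set.Ico ((j : ℝ) * π) (((j : ℝ) + 1) * π), φ x = phiRec A k a j x) :
    (Summable (fun j : ℤ => ‖a j‖ ^ 2) ↔
      MeasureTheory.Integrable (fun x : ℝ => ‖ψ x‖ ^ 2 + ‖φ x‖ ^ 2)) ∧
    ((∃ C : ℝ, ∀ j : ℤ, ‖a j‖ ≤ C) ↔
      (∃ C : ℝ, ∀ x : ℝ, ‖ψ x‖ ≤ C ∧ ‖φ x‖ ≤ C)) :=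
  duality_lp_correspondence_general A k hk a ψ φ hψ hφ
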